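/- arXiv:2412.11160 — 2 statements merged into one kernel-verified Lean document; each statement's English description precedes it below -/
import Mathlib

section
/- Let G=(V,E,w) be a connected weighted undirected graph with Laplacian matrix L. Then the Kemeny constant satisfies K = Σ_{j=1}^n d_j · (e_j − π)^T L† (e_j − π), where L† is the Moore–Penrose pseudoinverse of L and e_j is the j-th standard basis vector. -/
/-!
Fix a target `j` and let `h = H(·, j)`. Multiplying the first-step recurrence by `d_i` gives
`(L h)_i = d_i` for `i ≠ j`, and since `L` has zero column sums, `L h = deg - d e_j`, i.e.
`e_j - π = -(1/d) L h`. For any generalized inverse `G` of the symmetric `L` (`L G L = L`) this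
gives `(e_j - π)ᵀ G (e_j - π) = hᵀ L h / d² = (Σ_i d_i H_{ij}) / d²`, using `H_{jj} = 0`. Weighting
by `d_j` and summing, `Σ_j d_j H_{ij} = d K` for every `i` turns the double sum into `K`.
-/

open Matrix Finset

variable {ι R : Type*}

theorem laplacian_mulVec_apply [Fintype ι] [DecidableEq ι] [Ring R] (A : Matrix ι ι R)
    (deg v : ι → R) (i : ι) :
    ((diagonal deg - A) *ᵥ v) i = deg i * v i - ∑ k, A i k * v k := by
  rw [sub_mulVec, Pi.sub_apply, mulVec_diagonal]
  rfl

theorem laplacian_isSymm [DecidableEq ι] [Ring R] {A : Matrix ι ι R} (hsym : A.IsSymm)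
    (deg : ι → R) : (diagonal deg - A).IsSymm := by
  rw [IsSymm, transpose_sub, diagonal_transpose, hsym]

theorem sum_laplacian_mulVec [Fintype ι] [DecidableEq ι] [Ring R] {A : Matrix ι ι R}
    (hsym : A.IsSymm) {deg : ι → R} (hdeg : ∀ i, deg i = ∑ j, A i j) (v : ι → R) :
    ∑ i, ((diagonal deg - A) *ᵥ v) i = 0 := by
  have hcol : ∀ k, ∑ i, A i k = deg k := fun k => by
    rw [hdeg]
    exact sum_congr rfl fun i _ => hsym.apply k i
  simp only [laplacian_mulVec_apply, sum_sub_distrib]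
  rw [sum_comm]
  simp only [← sum_mul, hcol, sub_self]

theorem Matrix.IsSymm.dotProduct_mulVec_mulVec_of_mul_mul_eq_self [Fintype ι] [CommRing R]
    {L G : Matrix ι ι R} (hL : L.IsSymm) (hG : L * G * L = L) (u : ι → R) :
    (L *ᵥ u) ⬝ᵥ (G *ᵥ (L *ᵥ u)) = u ⬝ᵥ (L *ᵥ u) := by
  have hLu : L *ᵥ u = u ᵥ* L := by rw [← vecMul_transpose, hL.eq]
  nth_rw 1 [hLu]
  rw [← dotProduct_mulVec, mulVec_mulVec, mulVec_mulVec, hG]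

section HittingTime

variable [Fintype ι] {A : Matrix ι ι ℝ} {deg : ι → ℝ} {H : ι → ι → ℝ}

theorem degree_mul_hittingTime (hnonneg : ∀ i j, 0 ≤ A i j) (hdeg : ∀ i, deg i = ∑ j, A i j)
    (hHrec : ∀ i j, i ≠ j → H i j = 1 + ∑ k, (A i k / deg i) * H k j) {i j : ι} (hij : i ≠ j) :
    deg i * H i j = deg i + ∑ k, A i k * H k j := by
  by_cases hi : deg i = 0
  · have hrow : ∀ k, A i k = 0 := fun k =>
      (sum_eq_zero_iff_of_nonneg fun k _ => hnonneg i k).mp (hdeg i ▸ hi) k (mem_univ k)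
    simp [hi, hrow]
  · rw [hHrec i j hij, mul_add, mul_one, mul_sum]
    congr 1
    exact sum_congr rfl fun k _ => by field_simp

variable [DecidableEq ι]

theorem laplacian_mulVec_hittingTime (hsym : A.IsSymm) (hnonneg : ∀ i j, 0 ≤ A i j)
    (hdeg : ∀ i, deg i = ∑ j, A i j)
    (hHrec : ∀ i j, i ≠ j → H i j = 1 + ∑ k, (A i k / deg i) * H k j) (j : ι) :
    (diagonal deg - A) *ᵥ (fun k => H k j) = deg - (∑ i, deg i) • Pi.single j 1 := by
  have hoff : ∀ i, i ≠ j → ((diagonal deg - A) *ᵥ fun k => H k j) i = deg i := fun i hij => by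
    rw [laplacian_mulVec_apply, degree_mul_hittingTime hnonneg hdeg hHrec hij]
    ring
  have hat : ((diagonal deg - A) *ᵥ fun k => H k j) j = deg j - ∑ i, deg i := by
    have hsum := sum_laplacian_mulVec hsym hdeg (fun k => H k j)
    rw [← add_sum_erase _ _ (mem_univ j), sum_congr rfl fun i hi => hoff i (ne_of_mem_erase hi),
      sum_erase_eq_sub (mem_univ j)] at hsum
    linarith
  funext i
  by_cases hij : i = j
  · subst hij
    simp [hat]
  · simp [hoff i hij, hij]

theorem single_sub_stationary_dotProduct_mulVec (hsym : A.IsSymm) (hnonneg : ∀ i j, 0 ≤ A i j)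
    (hdeg : ∀ i, deg i = ∑ j, A i j)
    (hHrec : ∀ i j, i ≠ j → H i j = 1 + ∑ k, (A i k / deg i) * H k j) (hHdiag : ∀ j, H j j = 0)
    {G : Matrix ι ι ℝ} (hG : (diagonal deg - A) * G * (diagonal deg - A) = diagonal deg - A)
    {d : ℝ} (hd : d = ∑ i, deg i) (hd0 : d ≠ 0) (j : ι) :
    (Pi.single j 1 - d⁻¹ • deg) ⬝ᵥ (G *ᵥ (Pi.single j 1 - d⁻¹ • deg))
      = (∑ i, deg i * H i j) / d ^ 2 := by
  have hLh := laplacian_mulVec_hittingTime hsym hnonneg hdeg hHrec j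
  rw [← hd] at hLh
  have hx : Pi.single j 1 - d⁻¹ • deg = (-d⁻¹) • ((diagonal deg - A) *ᵥ fun k => H k j) := by
    rw [hLh, smul_sub, smul_smul, neg_mul, inv_mul_cancel₀ hd0]
    module
  rw [hx, mulVec_smul, smul_dotProduct, dotProduct_smul,
    (laplacian_isSymm hsym deg).dotProduct_mulVec_mulVec_of_mul_mul_eq_self hG, hLh]
  simp only [dotProduct_sub, dotProduct_smul, dotProduct_single, hHdiag, smul_eq_mul]
  rw [dotProduct_comm, dotProduct]
  ring

end HittingTime

theorem kemeny_eq_sum_quadratic_forms_general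
    (n : ℕ) (hn : 0 < n)
    (A : Matrix (Fin n) (Fin n) ℝ)
    (hsym : A.IsSymm)
    (hnonneg : ∀ i j, 0 ≤ A i j)
    (deg : Fin n → ℝ) (hdeg : ∀ i, deg i = ∑ j, A i j)
    (d : ℝ) (hd : d = ∑ i, deg i)
    (pi' : Fin n → ℝ) (hpi : ∀ i, pi' i = deg i / d)
    (L : Matrix (Fin n) (Fin n) ℝ) (hL : L = Matrix.diagonal deg - A)
    (Ldag : Matrix (Fin n) (Fin n) ℝ)
    (hMP1 : L * Ldag * L = L)
    (H : Fin n → Fin n → ℝ)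
    (hHdiag : ∀ j, H j j = 0)
    (hHrec : ∀ i j, i ≠ j → H i j = 1 + ∑ k, (A i k / deg i) * H k j)
    (K : ℝ) (hK : ∀ i, K = ∑ j, pi' j * H i j) :
    K = ∑ j, deg j * ((Pi.single j 1 - pi') ⬝ᵥ (Ldag *ᵥ (Pi.single j 1 - pi'))) := by
  have hdeg_nonneg : ∀ i, 0 ≤ deg i := fun i => hdeg i ▸ sum_nonneg fun j _ => hnonneg i j
  by_cases hd0 : d = 0
  · have hzero : ∀ i, deg i = 0 := fun i =>
      (sum_eq_zero_iff_of_nonneg fun i _ => hdeg_nonneg i).mp (hd ▸ hd0) i (mem_univ i)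
    rw [hK ⟨0, hn⟩]
    simp [hpi, hzero]
  obtain rfl : pi' = d⁻¹ • deg := funext fun i => by simp [hpi, div_eq_inv_mul]
  subst hL
  have hrow : ∀ i, ∑ j, deg j * H i j = d * K := fun i => by
    rw [hK i, mul_sum]
    exact sum_congr rfl fun j _ => by
      rw [Pi.smul_apply, smul_eq_mul]
      field_simp
  calc K = (∑ i, deg i * (d * K)) / d ^ 2 := by
        rw [← sum_mul, ← hd]
        field_simp
    _ = (∑ i, deg i * ∑ j, deg j * H i j) / d ^ 2 := by simp only [hrow]
    _ = ∑ j, deg j * ((∑ i, deg i * H i j) / d ^ 2) := by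
      simp_rw [mul_sum, sum_div, mul_sum]
      rw [sum_comm]
      exact sum_congr rfl fun j _ => sum_congr rfl fun i _ => by ring
    _ = _ := by
      simp only [single_sub_stationary_dotProduct_mulVec hsym hnonneg hdeg hHrec hHdiag hMP1 hd hd0]

/-- For a connected weighted undirected graph with Laplacian `L = D - A`, the Kemeny
constant satisfies `K = Σ_j d_j · (e_j − π)ᵀ L† (e_j − π)`, where `L†` is the Moore–Penrose
pseudoinverse of `L` (characterized by the four Penrose conditions) and `e_j` is the `j`-th
standard basis vector.  Hitting times `H i j` are characterized by their first-step recurrence,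
and `K = Σ_j π_j H_{ij}` (independent of `i`). -/
theorem kemeny_eq_sum_quadratic_forms
    (n : ℕ) (hn : 0 < n)
    (A : Matrix (Fin n) (Fin n) ℝ)
    (hsym : A.IsSymm)
    (hnonneg : ∀ i j, 0 ≤ A i j)
    (hloop : ∀ i, A i i = 0)
    (hconn : ∀ i j : Fin n, ∃ k : ℕ, (A ^ k) i j ≠ 0)
    (deg : Fin n → ℝ) (hdeg : ∀ i, deg i = ∑ j, A i j)
    (d : ℝ) (hd : d = ∑ i, deg i)
    (pi' : Fin n → ℝ) (hpi : ∀ i, pi' i = deg i / d)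
    (L : Matrix (Fin n) (Fin n) ℝ) (hL : L = Matrix.diagonal deg - A)
    (Ldag : Matrix (Fin n) (Fin n) ℝ)
    (hMP1 : L * Ldag * L = L)
    (hMP2 : Ldag * L * Ldag = Ldag)
    (hMP3 : (L * Ldag)ᵀ = L * Ldag)
    (hMP4 : (Ldag * L)ᵀ = Ldag * L)
    (H : Fin n → Fin n → ℝ)
    (hHdiag : ∀ j, H j j = 0)
    (hHrec : ∀ i j, i ≠ j → H i j = 1 + ∑ k, (A i k / deg i) * H k j)
    (K : ℝ) (hK : ∀ i, K = ∑ j, pi' j * H i j) :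
    K = ∑ j, deg j * ((Pi.single j 1 - pi') ⬝ᵥ (Ldag *ᵥ (Pi.single j 1 - pi'))) :=
  kemeny_eq_sum_quadratic_forms_general n hn A hsym hnonneg deg hdeg d hd pi' hpi L hL Ldag hMP1 H
    hHdiag hHrec K hK
end

section
/- Let G=(V,E,w) be a connected weighted undirected graph, k ≥ 2 an integer, and ε ∈ (0,1). Let u* = argmin_{u∈V} H({u}) and S* = argmin_{|S|=k} H(S). Suppose S_1, S_2, ..., S_k is any sequence of vertex sets with |S_i| = i, S_i ⊆ S_{i+1}, satisfying H(S_1) ≤ (1+ε) H({u*}), and such that each greedy step is ε-approximate: for each i, the vertex u added to S_i to form S_{i+1} maximizes a function Δ'(·, S_i) that satisfies (1−ε)Δ(u,S_i) ≤ Δ'(u,S_i) ≤ (1+ε)Δ(u,S_i) for all u ∈ V∖S_i, where Δ(u,S_i) = H(S_i) − H(S_i∪{u}). Then (1+ε)H({u*}) − H(S_k) ≥ (1 − (k/(k−1))·(1/e) − ε) · ((1+ε)H({u*}) − H(S*)). -/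
/-!
On a connected graph the random walk obeys a minimum principle: a function that is
superharmonic off a nonempty set `W` and nonnegative on `W` is nonnegative everywhere.
Applied to `H_{·W}`, to `H_{·W} - H_{·W'}` (harmonic off `W'` when `W ⊆ W'`) and to a second
difference of hitting times, it makes the group walk centrality `H` antitone and
supermodular. Supermodularity bounds `H(S) - H(S*)` by the sum of the marginal gains of the
vertices of `S*`, so every approximate greedy step closes at least a fraction
`c = (1 - ε) / ((1 + ε) k)` of the gap `H(S_i) - H(S*)`. After `k - 1` steps the gap has
shrunk by `(1 - c)^(k-1) ≤ exp (-(1 - ε)/(1 + ε) · (k - 1)/k) ≤ k/(k - 1) · e⁻¹ + ε`, and the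
initial gap is at most `(1 + ε) H({u*}) - H(S*)`.
-/

open Matrix BigOperators Finset

/-- Group walk centrality `H(S) = Σ_{i∈V} π_i H_{iS}`, where `HT S i = H_{iS}` is the group
hitting time of `S` from `i`. -/
noncomputable def gwcH (n : ℕ) (p : Fin n → ℝ) (HT : Finset (Fin n) → Fin n → ℝ)
    (S : Finset (Fin n)) : ℝ :=
  ∑ i, p i * HT S i

section RandomWalk

variable {ι : Type*} [Fintype ι]

noncomputable def transitionMatrix (A : Matrix ι ι ℝ) (deg : ι → ℝ) : Matrix ι ι ℝ :=
  Matrix.of fun i l => A i l / deg i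

def HasMinimumPrinciple (A : Matrix ι ι ℝ) (deg : ι → ℝ) : Prop :=
  ∀ (W : Finset ι) (g : ι → ℝ), W.Nonempty →
    (∀ i ∉ W, (transitionMatrix A deg *ᵥ g) i ≤ g i) → (∀ i ∈ W, 0 ≤ g i) → ∀ i, 0 ≤ g i

variable {A : Matrix ι ι ℝ} {deg : ι → ℝ}

lemma eq_of_superharmonic_at_min (hnonneg : ∀ i j, 0 ≤ A i j) (hdeg : ∀ i, deg i = ∑ j, A i j)
    {g : ι → ℝ} {l j : ι} (hmin : ∀ t, g l ≤ g t)
    (hsup : (transitionMatrix A deg *ᵥ g) l ≤ g l) (hA : A l j ≠ 0) : g j = g l := by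
  have hAlj : 0 < A l j := (hnonneg l j).lt_of_ne' hA
  have hdeg_pos : 0 < deg l :=
    hdeg l ▸ hAlj.trans_le (single_le_sum (fun t _ => hnonneg l t) (mem_univ j))
  have hw : ∀ t, 0 ≤ A l t / deg l * (g t - g l) := fun t =>
    mul_nonneg (div_nonneg (hnonneg l t) hdeg_pos.le) (sub_nonneg.2 (hmin t))
  have hsum : ∑ t, A l t / deg l * (g t - g l) = (transitionMatrix A deg *ᵥ g) l - g l := by
    simp only [mul_sub, sum_sub_distrib, ← sum_mul, ← sum_div, ← hdeg l,
      div_self hdeg_pos.ne', one_mul]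
    rfl
  have hzero := (sum_eq_zero_iff_of_nonneg fun t _ => hw t).1
    (le_antisymm (by linarith) (sum_nonneg fun t _ => hw t)) j (mem_univ j)
  have := (mul_eq_zero.1 hzero).resolve_left (div_pos hAlj hdeg_pos).ne'
  linarith

lemma eq_of_pow_apply_ne_zero [DecidableEq ι] (hnonneg : ∀ i j, 0 ≤ A i j)
    (hdeg : ∀ i, deg i = ∑ j, A i j) {g : ι → ℝ} {i : ι} (hmin : ∀ t, g i ≤ g t)
    (hsup : ∀ l, g l = g i → (transitionMatrix A deg *ᵥ g) l ≤ g l) :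
    ∀ (p : ℕ) (j : ι), (A ^ p) i j ≠ 0 → g j = g i := by
  intro p
  induction p with
  | zero =>
    intro j hij
    rw [pow_zero] at hij
    obtain rfl : i = j := by
      by_contra hij'
      exact hij (one_apply_ne hij')
    rfl
  | succ p ih =>
    intro j hij
    rw [pow_succ, mul_apply] at hij
    obtain ⟨l, -, hl⟩ := exists_ne_zero_of_sum_ne_zero hij
    have hgl : g l = g i := ih l (left_ne_zero_of_mul hl)
    rw [← hgl] at hmin ⊢
    exact eq_of_superharmonic_at_min hnonneg hdeg hmin (hsup l hgl) (right_ne_zero_of_mul hl)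

theorem hasMinimumPrinciple [DecidableEq ι] (hnonneg : ∀ i j, 0 ≤ A i j)
    (hdeg : ∀ i, deg i = ∑ j, A i j)
    (hconn : ∀ i j : ι, ∃ p : ℕ, (A ^ p) i j ≠ 0) : HasMinimumPrinciple A deg := by
  intro W g ⟨w, hw⟩ hsup hbd j
  obtain ⟨i, -, hmin⟩ := exists_min_image univ g ⟨w, mem_univ w⟩
  by_contra! hj
  have hneg : g i < 0 := (hmin j (mem_univ j)).trans_lt hj
  obtain ⟨p, hp⟩ := hconn i w
  have hgw := eq_of_pow_apply_ne_zero hnonneg hdeg (fun t => hmin t (mem_univ t))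
    (fun l hl => hsup l fun hlW => (hbd l hlW).not_gt (hl ▸ hneg)) p w hp
  linarith [hbd w hw]

structure IsGroupHittingTime (A : Matrix ι ι ℝ) (deg : ι → ℝ) (HT : Finset ι → ι → ℝ) :
    Prop where
  eq_zero_of_mem : ∀ W : Finset ι, W.Nonempty → ∀ i ∈ W, HT W i = 0
  eq_one_add_of_notMem : ∀ W : Finset ι, W.Nonempty → ∀ i ∉ W,
    HT W i = 1 + (transitionMatrix A deg *ᵥ HT W) i

namespace IsGroupHittingTime

variable {HT : Finset ι → ι → ℝ} {S T W W' : Finset ι} {i : ι}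

lemma nonneg (hHT : IsGroupHittingTime A deg HT) (hmp : HasMinimumPrinciple A deg)
    (hW : W.Nonempty) (i : ι) : 0 ≤ HT W i :=
  hmp W (HT W) hW (fun i hi => by linarith [hHT.eq_one_add_of_notMem W hW i hi])
    (fun i hi => (hHT.eq_zero_of_mem W hW i hi).ge) i

lemma mulVec_sub_apply (hHT : IsGroupHittingTime A deg HT) (hW : W.Nonempty)
    (hW' : W'.Nonempty) (hi : i ∉ W) (hi' : i ∉ W') :
    (transitionMatrix A deg *ᵥ (HT W - HT W')) i = (HT W - HT W') i := by
  rw [mulVec_sub, Pi.sub_apply, Pi.sub_apply, hHT.eq_one_add_of_notMem W hW i hi,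
    hHT.eq_one_add_of_notMem W' hW' i hi']
  ring

lemma antitone (hHT : IsGroupHittingTime A deg HT) (hmp : HasMinimumPrinciple A deg)
    (hW : W.Nonempty) (hWW' : W ⊆ W') (i : ι) : HT W' i ≤ HT W i := by
  have hW' := hW.mono hWW'
  refine sub_nonneg.1 (hmp W' (HT W - HT W') hW' (fun j hj => ?_) (fun j hj => ?_) i)
  · exact (hHT.mulVec_sub_apply hW hW' (fun h => hj (hWW' h)) hj).le
  · rw [Pi.sub_apply, hHT.eq_zero_of_mem W' hW' j hj, sub_zero]
    exact hHT.nonneg hmp hW j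

lemma supermodular [DecidableEq ι] (hHT : IsGroupHittingTime A deg HT)
    (hmp : HasMinimumPrinciple A deg) (hS : S.Nonempty) (hST : S ⊆ T) {u : ι} (hu : u ∉ T) (i : ι) :
    HT T i - HT (insert u T) i ≤ HT S i - HT (insert u S) i := by
  have hT := hS.mono hST
  have huS : (insert u S).Nonempty := insert_nonempty u S
  have huT : (insert u T).Nonempty := insert_nonempty u T
  refine sub_nonneg.1 (hmp (insert u T) ((HT S - HT (insert u S)) - (HT T - HT (insert u T)))
    huT (fun j hj => ?_) (fun j hj => ?_) i)
  · have hjT : j ∉ T := fun h => hj (mem_insert_of_mem h)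
    have hjuS : j ∉ insert u S := by
      simp only [mem_insert, not_or] at hj ⊢
      exact ⟨hj.1, fun h => hjT (hST h)⟩
    rw [mulVec_sub, Pi.sub_apply, Pi.sub_apply,
      hHT.mulVec_sub_apply hS huS (fun h => hjT (hST h)) hjuS,
      hHT.mulVec_sub_apply hT huT hjT hj]
  · simp only [Pi.sub_apply]
    rcases mem_insert.1 hj with rfl | hjT
    · rw [hHT.eq_zero_of_mem _ huS j (mem_insert_self j S),
        hHT.eq_zero_of_mem _ huT j (mem_insert_self j T)]
      linarith [hHT.antitone hmp hS hST j]
    · rw [hHT.eq_zero_of_mem T hT j hjT, hHT.eq_zero_of_mem _ huT j (mem_insert_of_mem hjT)]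
      linarith [hHT.antitone hmp hS (subset_insert u S) j]

end IsGroupHittingTime

end RandomWalk

section Greedy

variable {α : Type*}

def AntitoneOnNonempty (F : Finset α → ℝ) : Prop :=
  ∀ ⦃S T : Finset α⦄, S.Nonempty → S ⊆ T → F T ≤ F S

lemma AntitoneOnNonempty.le_of_card_le [Fintype α] {F : Finset α → ℝ} {O S : Finset α}
    (hF : AntitoneOnNonempty F) {k : ℕ} (hO : #O = k)
    (hmin : ∀ T : Finset α, #T = k → F O ≤ F T) (hS : S.Nonempty) (hSk : #S ≤ k) : F O ≤ F S := by
  obtain ⟨T, hST, -, hT⟩ := exists_subsuperset_card_eq (subset_univ S) hSk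
    (hO ▸ card_le_univ O)
  exact (hmin T hT).trans (hF hS hST)

variable [DecidableEq α]

def SupermodularOnNonempty (F : Finset α → ℝ) : Prop :=
  ∀ ⦃S T : Finset α⦄ ⦃u : α⦄, S.Nonempty → S ⊆ T → u ∉ T →
    F T - F (insert u T) ≤ F S - F (insert u S)

def IsApproxGreedyStep (F : Finset α → ℝ) (ε : ℝ) (S S' : Finset α) : Prop :=
  ∃ (Δ' : α → ℝ) (u : α), u ∉ S ∧ S' = insert u S ∧
    (∀ v, v ∉ S → (1 - ε) * (F S - F (insert v S)) ≤ Δ' v ∧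
      Δ' v ≤ (1 + ε) * (F S - F (insert v S))) ∧
    (∀ v, v ∉ S → Δ' v ≤ Δ' u)

variable {F : Finset α → ℝ} {ε : ℝ} {S S' O : Finset α}

lemma SupermodularOnNonempty.sub_union_le_sum (hF : SupermodularOnNonempty F)
    (hS : S.Nonempty) (T : Finset α) :
    F S - F (S ∪ T) ≤ ∑ u ∈ T \ S, (F S - F (insert u S)) := by
  induction T using Finset.induction_on with
  | empty => simp
  | insert a T ha ih =>
    rw [union_insert]
    by_cases haS : a ∈ S
    · rwa [insert_eq_of_mem (mem_union_left T haS), insert_sdiff_of_mem _ haS]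
    · rw [insert_sdiff_of_notMem _ haS, sum_insert (fun h => ha (mem_sdiff.1 h).1)]
      linarith [hF hS subset_union_left (show a ∉ S ∪ T by simp [haS, ha])]

lemma IsApproxGreedyStep.mul_sub_le (h : IsApproxGreedyStep F ε S S')
    (hanti : AntitoneOnNonempty F) (hsuper : SupermodularOnNonempty F) (hε : ε ≤ 1)
    (hS : S.Nonempty) (hO : O.Nonempty) :
    (1 - ε) * (F S - F O) ≤ #O * ((1 + ε) * (F S - F S')) := by
  obtain ⟨Δ', u, hu, rfl, hbound, hmax⟩ := h
  have hΔu : 0 ≤ F S - F (insert u S) := sub_nonneg.2 (hanti hS (subset_insert u S))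
  have hgain : ∀ v ∈ O \ S,
      (1 - ε) * (F S - F (insert v S)) ≤ (1 + ε) * (F S - F (insert u S)) := fun v hv =>
    have hv := (mem_sdiff.1 hv).2
    ((hbound v hv).1.trans (hmax v hv)).trans (hbound u hu).2
  have hgain_nonneg : 0 ≤ (1 + ε) * (F S - F (insert u S)) :=
    (mul_nonneg (by linarith) hΔu).trans ((hbound u hu).1.trans (hbound u hu).2)
  calc (1 - ε) * (F S - F O)
      ≤ (1 - ε) * ∑ v ∈ O \ S, (F S - F (insert v S)) := by
        gcongr
        linarith [hsuper.sub_union_le_sum hS O,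
          hanti hO (show O ⊆ S ∪ O from subset_union_right)]
    _ ≤ #(O \ S) * ((1 + ε) * (F S - F (insert u S))) := by
        rw [mul_sum, ← nsmul_eq_mul]
        exact sum_le_card_nsmul _ _ _ hgain
    _ ≤ #O * ((1 + ε) * (F S - F (insert u S))) := by
        gcongr
        exact sdiff_subset

theorem approx_greedy_sub_le_pow (hanti : AntitoneOnNonempty F)
    (hsuper : SupermodularOnNonempty F) (hε0 : 0 ≤ ε) (hε1 : ε ≤ 1) {k : ℕ} (hk : 1 ≤ k)
    (hO : #O = k) (Sseq : ℕ → Finset α) (hne : ∀ i, 1 ≤ i → i ≤ k → (Sseq i).Nonempty)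
    (hstep : ∀ i, 1 ≤ i → i < k → IsApproxGreedyStep F ε (Sseq i) (Sseq (i + 1))) :
    F (Sseq k) - F O ≤ (1 - (1 - ε) / ((1 + ε) * k)) ^ (k - 1) * (F (Sseq 1) - F O) := by
  obtain ⟨m, rfl⟩ : ∃ m, k = m + 1 := ⟨k - 1, by omega⟩
  have hOne : O.Nonempty := card_pos.1 (by omega)
  have hden : 0 < (1 + ε) * (m + 1 : ℕ) := by positivity
  rw [Nat.add_sub_cancel]
  refine le_geom (u := fun j => F (Sseq (j + 1)) - F O) ?_ m fun j hj => ?_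
  · rw [sub_nonneg, div_le_one hden]
    push_cast
    nlinarith
  · have := (hstep (j + 1) (by omega) (by omega)).mul_sub_le hanti hsuper hε1
      (hne (j + 1) (by omega) (by omega)) hOne
    rw [hO] at this
    have hgain : (1 - ε) / ((1 + ε) * (m + 1 : ℕ)) * (F (Sseq (j + 1)) - F O)
        ≤ F (Sseq (j + 1)) - F (Sseq (j + 1 + 1)) := by
      rw [div_mul_eq_mul_div, div_le_iff₀ hden]
      linarith
    linear_combination hgain

end Greedy

section Numerics

open Real

lemma one_sub_pow_le_exp_neg_mul {y : ℝ} (hy : y ≤ 1) (m : ℕ) :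
    (1 - y) ^ m ≤ exp (-(m * y)) := by
  calc (1 - y) ^ m ≤ exp (-y) ^ m := pow_le_pow_left₀ (by linarith) (one_sub_le_exp_neg y) m
    _ = exp (-(m * y)) := by rw [← exp_nat_mul]; ring_nf

lemma exp_neg_mul_le_exp_neg_add {ε t : ℝ} (hε : 0 ≤ ε) (ht : t ≤ 1) :
    exp (-((1 - ε) / (1 + ε) * t)) ≤ exp (-t) + ε := by
  set r := (1 - ε) / (1 + ε)
  set E := exp (-(r * t))
  have hr : (1 + r) * (1 + ε) = 2 := by simp only [r]; field_simp; ring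
  have hE : E * (1 + r * t) ≤ 1 := by
    rw [show E = (exp (r * t))⁻¹ from exp_neg _, inv_mul_le_iff₀ (exp_pos _), mul_one]
    linarith [add_one_le_exp (r * t)]
  have hEt : 2 * (E * t) ≤ 1 + ε := by
    have : E * t * (1 + r) ≤ 1 := by nlinarith [exp_pos (-(r * t))]
    nlinarith
  have hgap : 1 - exp (-((1 - r) * t)) ≤ (1 - r) * t := by
    linarith [one_sub_le_exp_neg ((1 - r) * t)]
  have hsplit : exp (-t) = E * exp (-((1 - r) * t)) := by rw [← exp_add]; ring_nf
  have h1r : (1 - r) * (1 + ε) = 2 * ε := by simp only [r]; field_simp; ring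
  -- `exp (-(r t)) - exp (-t) ≤ E (1 - r) t = ε · 2 E t / (1 + ε) ≤ ε`
  nlinarith [exp_pos (-(r * t)), mul_le_mul_of_nonneg_left hgap (exp_pos (-(r * t))).le]

lemma exp_neg_le_exp_neg_one_div {t : ℝ} (ht : 0 < t) : exp (-t) ≤ exp (-1) / t := by
  rw [le_div_iff₀ ht, mul_comm]
  exact mul_exp_neg_le_exp_neg_one t

lemma greedy_rate_pow_le {k : ℕ} (hk : 2 ≤ k) {ε : ℝ} (hε : 0 ≤ ε) :
    (1 - (1 - ε) / ((1 + ε) * k)) ^ (k - 1) ≤ k / (k - 1) * (1 / exp 1) + ε := by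
  have hk' : (2 : ℝ) ≤ k := by exact_mod_cast hk
  set t : ℝ := (k - 1) / k
  have ht : 0 < t := div_pos (by linarith) (by linarith)
  calc (1 - (1 - ε) / ((1 + ε) * k)) ^ (k - 1)
      ≤ exp (-((k - 1 : ℕ) * ((1 - ε) / ((1 + ε) * k)))) := by
        refine one_sub_pow_le_exp_neg_mul ?_ _
        rw [div_le_one (by positivity)]
        nlinarith
    _ = exp (-((1 - ε) / (1 + ε) * t)) := by
        rw [Nat.cast_sub (by omega : 1 ≤ k)]
        simp only [t]; push_cast; field_simp
    _ ≤ exp (-t) + ε :=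
        exp_neg_mul_le_exp_neg_add hε (div_le_one_of_le₀ (by linarith) (by linarith))
    _ ≤ exp (-1) / t + ε := by gcongr; exact exp_neg_le_exp_neg_one_div ht
    _ = k / (k - 1) * (1 / exp 1) + ε := by
        rw [exp_neg]; simp only [t]; field_simp

end Numerics

section GroupWalkCentrality

variable {n : ℕ} {A : Matrix (Fin n) (Fin n) ℝ} {deg p : Fin n → ℝ}
  {HT : Finset (Fin n) → Fin n → ℝ}

lemma gwcH_sub_gwcH (S T : Finset (Fin n)) :
    gwcH n p HT S - gwcH n p HT T = ∑ i, p i * (HT S i - HT T i) := by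
  simp only [gwcH, mul_sub, sum_sub_distrib]

lemma antitoneOnNonempty_gwcH (hHT : IsGroupHittingTime A deg HT)
    (hmp : HasMinimumPrinciple A deg) (hp : ∀ i, 0 ≤ p i) :
    AntitoneOnNonempty (gwcH n p HT) := fun _ _ hS hST =>
  sum_le_sum fun i _ => mul_le_mul_of_nonneg_left (hHT.antitone hmp hS hST i) (hp i)

lemma supermodularOnNonempty_gwcH (hHT : IsGroupHittingTime A deg HT)
    (hmp : HasMinimumPrinciple A deg) (hp : ∀ i, 0 ≤ p i) :
    SupermodularOnNonempty (gwcH n p HT) := fun _ _ _ hS hST hu => by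
  rw [gwcH_sub_gwcH, gwcH_sub_gwcH]
  exact sum_le_sum fun i _ =>
    mul_le_mul_of_nonneg_left (hHT.supermodular hmp hS hST hu i) (hp i)

end GroupWalkCentrality

theorem approx_greedy_gwc_guarantee_general
    (n : ℕ)
    (A : Matrix (Fin n) (Fin n) ℝ)
    (hnonneg : ∀ i j, 0 ≤ A i j)
    (hconn : ∀ i j : Fin n, ∃ p : ℕ, (A ^ p) i j ≠ 0)
    (deg : Fin n → ℝ) (hdeg : ∀ i, deg i = ∑ j, A i j)
    (d : ℝ) (hd : d = ∑ i, deg i)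
    (pi' : Fin n → ℝ) (hpi : ∀ i, pi' i = deg i / d)
    (HT : Finset (Fin n) → Fin n → ℝ)
    (hHT0 : ∀ W : Finset (Fin n), W.Nonempty → ∀ i ∈ W, HT W i = 0)
    (hHTrec : ∀ W : Finset (Fin n), W.Nonempty → ∀ i, i ∉ W →
      HT W i = 1 + ∑ l, (A i l / deg i) * HT W l)
    (k : ℕ) (hk : 2 ≤ k)
    (ε : ℝ) (hε0 : 0 < ε) (hε1 : ε < 1)
    (ustar : Fin n)
    (Sopt : Finset (Fin n)) (hSoptcard : Sopt.card = k)
    (hSoptmin : ∀ T : Finset (Fin n), T.card = k → gwcH n pi' HT Sopt ≤ gwcH n pi' HT T)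
    (Sseq : ℕ → Finset (Fin n))
    (hScard : ∀ i, 1 ≤ i → i ≤ k → (Sseq i).card = i)
    (hS1 : gwcH n pi' HT (Sseq 1) ≤ (1 + ε) * gwcH n pi' HT {ustar})
    (hgreedy : ∀ i, 1 ≤ i → i < k →
      ∃ (Δ' : Fin n → ℝ) (u : Fin n), u ∉ Sseq i ∧
        Sseq (i + 1) = insert u (Sseq i) ∧
        (∀ v, v ∉ Sseq i →
          (1 - ε) * (gwcH n pi' HT (Sseq i) - gwcH n pi' HT (insert v (Sseq i))) ≤ Δ' v ∧
          Δ' v ≤ (1 + ε) *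
            (gwcH n pi' HT (Sseq i) - gwcH n pi' HT (insert v (Sseq i)))) ∧
        (∀ v, v ∉ Sseq i → Δ' v ≤ Δ' u)) :
    (1 - ((k : ℝ) / ((k : ℝ) - 1)) * (1 / Real.exp 1) - ε) *
        ((1 + ε) * gwcH n pi' HT {ustar} - gwcH n pi' HT Sopt)
      ≤ (1 + ε) * gwcH n pi' HT {ustar} - gwcH n pi' HT (Sseq k) := by
  have hmp := hasMinimumPrinciple hnonneg hdeg hconn
  have hHT : IsGroupHittingTime A deg HT := ⟨hHT0, hHTrec⟩
  have hpi_nonneg : ∀ i, 0 ≤ pi' i := fun i => by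
    have hdeg_nonneg : ∀ j, 0 ≤ deg j := fun j => hdeg j ▸ sum_nonneg fun l _ => hnonneg j l
    rw [hpi, hd]
    exact div_nonneg (hdeg_nonneg i) (sum_nonneg fun j _ => hdeg_nonneg j)
  have hanti := antitoneOnNonempty_gwcH hHT hmp hpi_nonneg
  have hne : ∀ i, 1 ≤ i → i ≤ k → (Sseq i).Nonempty := fun i h1 h2 =>
    card_pos.1 (by rw [hScard i h1 h2]; omega)
  have hgap₁ : 0 ≤ gwcH n pi' HT (Sseq 1) - gwcH n pi' HT Sopt :=
    sub_nonneg.2 (hanti.le_of_card_le hSoptcard hSoptmin (hne 1 le_rfl (by omega))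
      (by rw [hScard 1 le_rfl (by omega)]; omega))
  have hgeom := approx_greedy_sub_le_pow hanti (supermodularOnNonempty_gwcH hHT hmp hpi_nonneg)
    hε0.le hε1.le (by omega) hSoptcard Sseq hne hgreedy
  have hk' : (1 : ℝ) ≤ k - 1 := by
    have : (2 : ℝ) ≤ k := by exact_mod_cast hk
    linarith
  have hrate_nonneg : 0 ≤ (k : ℝ) / (k - 1) * (1 / Real.exp 1) + ε :=
    add_nonneg (mul_nonneg (div_nonneg k.cast_nonneg (zero_le_one.trans hk')) (by positivity))
      hε0.le
  have hgap_k : gwcH n pi' HT (Sseq k) - gwcH n pi' HT Sopt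
      ≤ ((k : ℝ) / (k - 1) * (1 / Real.exp 1) + ε)
        * ((1 + ε) * gwcH n pi' HT {ustar} - gwcH n pi' HT Sopt) :=
    hgeom.trans <| (mul_le_mul_of_nonneg_right (greedy_rate_pow_le hk hε0.le) hgap₁).trans <|
      mul_le_mul_of_nonneg_left (by linarith) hrate_nonneg
  linear_combination hgap_k

/-- Approximate greedy guarantee.  If `S_1, …, S_k` is a nested sequence with
`|S_i| = i`, `H(S_1) ≤ (1+ε) H({u*})`, and each step adds a vertex maximizing an
`ε`-approximation `Δ'` of the marginal gain `Δ(u, S_i) = H(S_i) − H(S_i ∪ {u})`, then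
`(1+ε)H({u*}) − H(S_k) ≥ (1 − (k/(k−1))·(1/e) − ε) · ((1+ε)H({u*}) − H(S*))`, where
`u* = argmin_u H({u})` and `S* = argmin_{|S|=k} H(S)`.  Group hitting times
`HT S i = H_{iS}` are characterized by vanishing on `S` and the first-step recurrence. -/
theorem approx_greedy_gwc_guarantee
    (n : ℕ) (hn : 0 < n)
    (A : Matrix (Fin n) (Fin n) ℝ)
    (hsym : A.IsSymm)
    (hnonneg : ∀ i j, 0 ≤ A i j)
    (hloop : ∀ i, A i i = 0)
    (hconn : ∀ i j : Fin n, ∃ p : ℕ, (A ^ p) i j ≠ 0)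
    (deg : Fin n → ℝ) (hdeg : ∀ i, deg i = ∑ j, A i j)
    (d : ℝ) (hd : d = ∑ i, deg i)
    (pi' : Fin n → ℝ) (hpi : ∀ i, pi' i = deg i / d)
    (HT : Finset (Fin n) → Fin n → ℝ)
    (hHT0 : ∀ W : Finset (Fin n), W.Nonempty → ∀ i ∈ W, HT W i = 0)
    (hHTrec : ∀ W : Finset (Fin n), W.Nonempty → ∀ i, i ∉ W →
      HT W i = 1 + ∑ l, (A i l / deg i) * HT W l)
    (k : ℕ) (hk : 2 ≤ k)
    (ε : ℝ) (hε0 : 0 < ε) (hε1 : ε < 1)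
    (ustar : Fin n)
    (hustar : ∀ v : Fin n, gwcH n pi' HT {ustar} ≤ gwcH n pi' HT {v})
    (Sopt : Finset (Fin n)) (hSoptcard : Sopt.card = k)
    (hSoptmin : ∀ T : Finset (Fin n), T.card = k → gwcH n pi' HT Sopt ≤ gwcH n pi' HT T)
    (Sseq : ℕ → Finset (Fin n))
    (hScard : ∀ i, 1 ≤ i → i ≤ k → (Sseq i).card = i)
    (hSmono : ∀ i, 1 ≤ i → i < k → Sseq i ⊆ Sseq (i + 1))
    (hS1 : gwcH n pi' HT (Sseq 1) ≤ (1 + ε) * gwcH n pi' HT {ustar})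
    (hgreedy : ∀ i, 1 ≤ i → i < k →
      ∃ (Δ' : Fin n → ℝ) (u : Fin n), u ∉ Sseq i ∧
        Sseq (i + 1) = insert u (Sseq i) ∧
        (∀ v, v ∉ Sseq i →
          (1 - ε) * (gwcH n pi' HT (Sseq i) - gwcH n pi' HT (insert v (Sseq i))) ≤ Δ' v ∧
          Δ' v ≤ (1 + ε) *
            (gwcH n pi' HT (Sseq i) - gwcH n pi' HT (insert v (Sseq i)))) ∧
        (∀ v, v ∉ Sseq i → Δ' v ≤ Δ' u)) :
    (1 - ((k : ℝ) / ((k : ℝ) - 1)) * (1 / Real.exp 1) - ε) *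
        ((1 + ε) * gwcH n pi' HT {ustar} - gwcH n pi' HT Sopt)
      ≤ (1 + ε) * gwcH n pi' HT {ustar} - gwcH n pi' HT (Sseq k) :=
  approx_greedy_gwc_guarantee_general n A hnonneg hconn deg hdeg d hd pi' hpi HT hHT0 hHTrec k hk ε
    hε0 hε1 ustar Sopt hSoptcard hSoptmin Sseq hScard hS1 hgreedy
end
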